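/- Define C_d(t) = ∫₀^t (p(s)·p(t−s)/p(t)) ds with p(t) = ((1 + e^{-2t/d})/2)^d. Then for every integer d ≥ 1, C_d(√d) ≥ e^{-1}·√d. -/
import Mathlib


/-- Return probability at time `t` of the continuous-time walk on the `d`-dimensional
hypercube. -/
noncomputable def hcReturnProb (d : ℕ) (t : ℝ) : ℝ := ((1 + Real.exp (-2 * t / d)) / 2) ^ d

/-- Expected time spent at the origin up to time `t` conditioned on being at the origin
at time `t`. -/
noncomputable def hcCondTime (d : ℕ) (t : ℝ) : ℝ :=
  ∫ s in (0 : ℝ)..t, hcReturnProb d s * hcReturnProb d (t - s) / hcReturnProb d t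

lemma hcReturnProb_pos (d : ℕ) (t : ℝ) : 0 < hcReturnProb d t := by
  unfold hcReturnProb
  positivity

lemma exp_le_hcReturnProb (d : ℕ) (hd : 1 ≤ d) (t : ℝ) :
    Real.exp (-t) ≤ hcReturnProb d t := by
  have hd0 : (0:ℝ) < d := by exact_mod_cast hd
  have h1 : Real.exp (-t) = (Real.exp (-t / d)) ^ d := by
    rw [← Real.exp_nat_mul]
    congr 1
    field_simp
  rw [h1]
  unfold hcReturnProb
  apply pow_le_pow_left₀ (Real.exp_pos _).le
  have h2 : Real.exp (-2 * t / d) = (Real.exp (-t / d)) ^ 2 := by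
    rw [← Real.exp_nat_mul]
    congr 1
    ring
  rw [h2]
  nlinarith [sq_nonneg (1 - Real.exp (-t / d))]

lemma hcReturnProb_le (d : ℕ) (hd : 1 ≤ d) (t : ℝ) :
    hcReturnProb d t ≤ Real.exp (-t + t ^ 2 / (2 * d)) := by
  have hd0 : (0:ℝ) < d := by exact_mod_cast hd
  unfold hcReturnProb
  have key : (1 + Real.exp (-2 * t / d)) / 2 ≤ Real.exp (-(t / d) + (t / d) ^ 2 / 2) := by
    have hcosh := Real.cosh_le_exp_half_sq (t / d)
    have h1 : (1 + Real.exp (-2 * t / d)) / 2 =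
        Real.exp (-(t / d)) * Real.cosh (t / d) := by
      have e2 : Real.exp (-2 * t / d) = Real.exp (-(t / d)) * Real.exp (-(t / d)) := by
        rw [← Real.exp_add]; congr 1; ring
      have e0 : Real.exp (-(t / d)) * Real.exp (t / d) = 1 := by
        rw [← Real.exp_add]; simp
      rw [Real.cosh_eq, e2]
      linear_combination (-(1:ℝ)/2) * e0
    rw [h1, Real.exp_add]
    calc Real.exp (-(t / d)) * Real.cosh (t / d)
        ≤ Real.exp (-(t / d)) * Real.exp ((t / d) ^ 2 / 2) := by
          exact mul_le_mul_of_nonneg_left hcosh (Real.exp_pos _).le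
      _ = Real.exp (-(t / d)) * Real.exp ((t / d) ^ 2 / 2) := rfl
  calc ((1 + Real.exp (-2 * t / d)) / 2) ^ d
      ≤ (Real.exp (-(t / d) + (t / d) ^ 2 / 2)) ^ d := by
        apply pow_le_pow_left₀ (by positivity) key
    _ = Real.exp (d * (-(t / d) + (t / d) ^ 2 / 2)) := by rw [← Real.exp_nat_mul]
    _ = Real.exp (-t + t ^ 2 / (2 * d)) := by
        congr 1
        field_simp

theorem hcCondTime_sqrt_lower (d : ℕ) (hd : 1 ≤ d) :
    Real.exp (-1) * Real.sqrt d ≤ hcCondTime d (Real.sqrt d) := by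
  have hd0 : (0:ℝ) < d := by exact_mod_cast hd
  set t := Real.sqrt d with ht
  have ht0 : 0 ≤ t := Real.sqrt_nonneg _
  have htsq : t ^ 2 = d := Real.sq_sqrt hd0.le
  have hpt : hcReturnProb d t ≤ Real.exp (-t + 1) := by
    calc hcReturnProb d t ≤ Real.exp (-t + t ^ 2 / (2 * d)) := hcReturnProb_le d hd t
      _ ≤ Real.exp (-t + 1) := by
          apply Real.exp_le_exp.mpr
          rw [htsq]
          have : (d:ℝ) / (2 * d) = 1 / 2 := by field_simp
          rw [this]; linarith
  have hbound : ∀ s ∈ Set.Icc (0:ℝ) t,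
      Real.exp (-1) ≤ hcReturnProb d s * hcReturnProb d (t - s) / hcReturnProb d t := by
    intro s _
    have h1 : Real.exp (-t) ≤ hcReturnProb d s * hcReturnProb d (t - s) := by
      calc Real.exp (-t) = Real.exp (-s) * Real.exp (-(t - s)) := by
            rw [← Real.exp_add]; congr 1; ring
        _ ≤ hcReturnProb d s * hcReturnProb d (t - s) :=
            mul_le_mul (exp_le_hcReturnProb d hd s) (exp_le_hcReturnProb d hd (t - s))
              (Real.exp_pos _).le (hcReturnProb_pos d s).le
    have hp := hcReturnProb_pos d t
    rw [le_div_iff₀ hp]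
    calc Real.exp (-1) * hcReturnProb d t ≤ Real.exp (-1) * Real.exp (-t + 1) :=
          mul_le_mul_of_nonneg_left hpt (Real.exp_pos _).le
      _ = Real.exp (-t) := by rw [← Real.exp_add]; ring_nf
      _ ≤ _ := h1
  have hcont : Continuous fun s =>
      hcReturnProb d s * hcReturnProb d (t - s) / hcReturnProb d t := by
    apply Continuous.div_const
    apply Continuous.mul
    · unfold hcReturnProb; fun_prop
    · unfold hcReturnProb; fun_prop
  have hint : IntervalIntegrable
      (fun s => hcReturnProb d s * hcReturnProb d (t - s) / hcReturnProb d t)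
      MeasureTheory.volume 0 t := hcont.intervalIntegrable _ _
  have := intervalIntegral.integral_mono_on ht0
    (intervalIntegrable_const (c := Real.exp (-1))) hint hbound
  rw [intervalIntegral.integral_const, smul_eq_mul, sub_zero, mul_comm] at this
  exact this.trans_eq rfl
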